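/- arXiv:1910.11869 — 7 statements merged into one kernel-verified Lean document; each statement's English description precedes it below -/
import Mathlib

section
/- Let μ > 0 and let X be a nonnegative random variable with E[X²] < ∞. Let ρ₁ ∈ (0,1) satisfy ρ₁ = E[e^{−μ(1−ρ₁)X}]. Let T ~ Exp(μ(1−ρ₁)) and S ~ Exp(μ), with X, T, S mutually independent, and set Y = S + max(X − T, 0). Then E[Y²] = E[X²] − (2ρ₁/(μ(1−ρ₁)))·E[X] + 2/(μ²(1−ρ₁)). -/
/-!
Conditionally on `X = x`, memorylessness of `T ~ Exp(ν)` gives `E[((T - x)⁺)ᵏ] = e^{-νx} E[Tᵏ]`.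
Writing `(x - t)⁺ = (x - t) + (t - x)⁺` and `((x - t)⁺)² = (x - t)² - ((t - x)⁺)²`, this yields the
first two moments of `(x - T)⁺` in closed form; averaging over `X` replaces `E[e^{-νX}]` by `ρ₁`.
Since `S` is independent of `(X - T)⁺`, `E[Y²] = E[S²] + 2 E[S] E[(X - T)⁺] + E[((X - T)⁺)²]`.
-/

open MeasureTheory ProbabilityTheory Set Real
open scoped Nat

namespace ProbabilityTheory

variable {θ : ℝ}

lemma expMeasure_eq_withDensity (θ : ℝ) :
    expMeasure θ = (volume.restrict (Ioi 0)).withDensity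
      fun t ↦ ENNReal.ofReal (θ * exp (-θ * t)) := by
  have hpdf : exponentialPDF θ = (Ici 0).indicator fun t ↦ ENNReal.ofReal (θ * exp (-θ * t)) := by
    ext t
    by_cases ht : 0 ≤ t
    · simp [exponentialPDF_of_nonneg ht, ht]
    · simp [exponentialPDF_of_neg (not_le.mp ht), ht]
  rw [expMeasure, gammaMeasure, show gammaPDF 1 θ = exponentialPDF θ from rfl, hpdf,
    withDensity_indicator measurableSet_Ici, Measure.restrict_congr_set Ioi_ae_eq_Ici]

lemma integral_expMeasure (hθ : 0 ≤ θ) (f : ℝ → ℝ) :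
    ∫ t, f t ∂expMeasure θ = ∫ t in Ioi 0, θ * exp (-θ * t) * f t := by
  rw [expMeasure_eq_withDensity, integral_withDensity_eq_integral_toReal_smul (by fun_prop)
    (ae_of_all _ fun _ ↦ ENNReal.ofReal_lt_top)]
  simp_rw [ENNReal.toReal_ofReal (by positivity : 0 ≤ θ * exp _), smul_eq_mul]

lemma integrable_expMeasure_iff (hθ : 0 ≤ θ) {f : ℝ → ℝ} :
    Integrable f (expMeasure θ) ↔ IntegrableOn (fun t ↦ θ * exp (-θ * t) * f t) (Ioi 0) := by
  rw [expMeasure_eq_withDensity, integrable_withDensity_iff_integrable_smul' (by fun_prop)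
    (ae_of_all _ fun _ ↦ ENNReal.ofReal_lt_top)]
  simp_rw [ENNReal.toReal_ofReal (by positivity : 0 ≤ θ * exp _), smul_eq_mul, IntegrableOn]

lemma integrable_pow_expMeasure (hθ : 0 < θ) (k : ℕ) :
    Integrable (fun t ↦ t ^ k) (expMeasure θ) := by
  rw [integrable_expMeasure_iff hθ.le]
  have h := (integrableOn_rpow_mul_exp_neg_mul_rpow (s := k)
    (by linarith [k.cast_nonneg (α := ℝ)]) one_pos hθ).const_mul θ
  refine IntegrableOn.congr_fun h (fun t _ ↦ ?_) measurableSet_Ioi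
  simp only [rpow_one, rpow_natCast]
  ring

lemma integral_pow_expMeasure (hθ : 0 < θ) (k : ℕ) :
    ∫ t, t ^ k ∂expMeasure θ = k ! / θ ^ k := by
  have hGamma := integral_rpow_mul_exp_neg_mul_Ioi (a := k + 1) (by positivity) hθ
  rw [add_sub_cancel_right, Gamma_nat_eq_factorial, ← Nat.cast_succ, rpow_natCast] at hGamma
  rw [integral_expMeasure hθ.le]
  calc ∫ t in Ioi 0, θ * exp (-θ * t) * t ^ k
      = θ * ∫ t in Ioi 0, t ^ (k : ℝ) * exp (-(θ * t)) := by
        rw [← integral_const_mul]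
        refine setIntegral_congr_fun measurableSet_Ioi fun t _ ↦ ?_
        simp only [rpow_natCast, neg_mul]
        ring
    _ = k ! / θ ^ k := by
        rw [hGamma, one_div, inv_pow, pow_succ]
        field_simp

lemma integral_max_sub_const_pow_expMeasure (hθ : 0 ≤ θ) {x : ℝ} (hx : 0 ≤ x) {k : ℕ}
    (hk : k ≠ 0) :
    ∫ t, max (t - x) 0 ^ k ∂expMeasure θ = exp (-θ * x) * ∫ t, t ^ k ∂expMeasure θ := by
  rw [integral_expMeasure hθ, integral_expMeasure hθ, ← integral_const_mul]
  have hshift := (measurePreserving_add_right volume x).setIntegral_preimage_emb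
    (Homeomorph.addRight x).measurableEmbedding (fun t ↦ θ * exp (-θ * t) * (t - x) ^ k) (Ioi x)
  rw [preimage_add_const_Ioi, sub_self] at hshift
  calc ∫ t in Ioi 0, θ * exp (-θ * t) * max (t - x) 0 ^ k
      = ∫ t in Ioi x, θ * exp (-θ * t) * max (t - x) 0 ^ k := by
        refine setIntegral_eq_of_subset_of_forall_sdiff_eq_zero measurableSet_Ioi
          (Ioi_subset_Ioi hx) fun t ht ↦ ?_
        rw [max_eq_right (sub_nonpos.mpr (not_lt.mp ht.2)), zero_pow hk, mul_zero]
    _ = ∫ t in Ioi x, θ * exp (-θ * t) * (t - x) ^ k :=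
        setIntegral_congr_fun measurableSet_Ioi fun t ht ↦ by
          rw [max_eq_left (sub_nonneg.mpr (le_of_lt ht))]
    _ = ∫ t in Ioi 0, exp (-θ * x) * (θ * exp (-θ * t) * t ^ k) := by
        rw [← hshift]
        refine setIntegral_congr_fun measurableSet_Ioi fun t _ ↦ ?_
        simp only [add_sub_cancel_right, mul_add, exp_add]
        ring

lemma integrable_max_sub_const_pow_expMeasure (hθ : 0 < θ) {x : ℝ} (hx : 0 ≤ x) (k : ℕ) :
    Integrable (fun t ↦ max (t - x) 0 ^ k) (expMeasure θ) := by
  refine (integrable_pow_expMeasure hθ k).norm.mono' (by fun_prop) (ae_of_all _ fun t ↦ ?_)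
  have h : max (t - x) 0 ≤ |t| := max_le (by linarith [le_abs_self t]) (abs_nonneg t)
  rw [norm_pow, norm_pow, Real.norm_of_nonneg (le_max_right _ _), Real.norm_eq_abs]
  exact pow_le_pow_left₀ (le_max_right _ _) h k

lemma integral_max_const_sub_expMeasure (hθ : 0 < θ) {x : ℝ} (hx : 0 ≤ x) :
    ∫ t, max (x - t) 0 ∂expMeasure θ = x - (1 - exp (-θ * x)) / θ := by
  have := isProbabilityMeasure_expMeasure hθ
  have hidInt := integrable_pow_expMeasure hθ 1
  have hexcessInt := integrable_max_sub_const_pow_expMeasure hθ hx 1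
  have hmean := integral_pow_expMeasure hθ 1
  have hexcess := integral_max_sub_const_pow_expMeasure hθ.le hx one_ne_zero
  simp only [pow_one, Nat.factorial_one, Nat.cast_one] at hidInt hexcessInt hmean hexcess
  have hsplit : (fun t ↦ max (x - t) 0) = fun t ↦ x - t + max (t - x) 0 := by
    ext t
    grind
  have hlin : Integrable (fun t ↦ x - t) (expMeasure θ) := (integrable_const x).sub hidInt
  rw [hsplit, integral_add hlin hexcessInt, integral_sub (integrable_const x) hidInt,
    hexcess, hmean, integral_const, probReal_univ, one_smul]
  field_simp
  ring

lemma integral_max_const_sub_sq_expMeasure (hθ : 0 < θ) {x : ℝ} (hx : 0 ≤ x) :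
    ∫ t, max (x - t) 0 ^ 2 ∂expMeasure θ
      = x ^ 2 - 2 * x / θ + 2 * (1 - exp (-θ * x)) / θ ^ 2 := by
  have := isProbabilityMeasure_expMeasure hθ
  have hidInt := integrable_pow_expMeasure hθ 1
  have hsqInt := integrable_pow_expMeasure hθ 2
  have hexcessInt := integrable_max_sub_const_pow_expMeasure hθ hx 2
  have hmean := integral_pow_expMeasure hθ 1
  have hmean2 := integral_pow_expMeasure hθ 2
  have hexcess := integral_max_sub_const_pow_expMeasure hθ.le hx two_ne_zero
  simp only [pow_one, Nat.factorial_one, Nat.cast_one] at hidInt hmean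
  have hlin : Integrable (fun t ↦ x ^ 2 - 2 * x * t) (expMeasure θ) :=
    (integrable_const _).sub (hidInt.const_mul _)
  have hquad : Integrable (fun t ↦ x ^ 2 - 2 * x * t + t ^ 2) (expMeasure θ) := hlin.add hsqInt
  have hsplit :
      (fun t ↦ max (x - t) 0 ^ 2) = fun t ↦ x ^ 2 - 2 * x * t + t ^ 2 - max (t - x) 0 ^ 2 := by
    ext t
    grind
  rw [hsplit, integral_sub hquad hexcessInt, integral_add hlin hsqInt,
    integral_sub (integrable_const _) (hidInt.const_mul _), integral_const_mul, hexcess, hmean,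
    hmean2, integral_const, probReal_univ, one_smul]
  field_simp
  ring

lemma ae_nonneg_expMeasure (θ : ℝ) : ∀ᵐ t ∂expMeasure θ, 0 ≤ t := by
  rw [expMeasure_eq_withDensity]
  exact (withDensity_absolutelyContinuous _ _).ae_le
    ((ae_restrict_mem measurableSet_Ioi).mono fun _ ht ↦ le_of_lt ht)

lemma IndepFun.integral_comp_eq_integral_integral {Ω α β : Type*} {mΩ : MeasurableSpace Ω}
    {mα : MeasurableSpace α} {mβ : MeasurableSpace β} {P : Measure Ω} [IsFiniteMeasure P]
    {X : Ω → α} {T : Ω → β} {ν : Measure β} (hXT : X ⟂ᵢ[P] T) (hX : AEMeasurable X P)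
    (hT : HasLaw T ν P) {g : α → β → ℝ} (hg : Measurable (Function.uncurry g))
    (hint : Integrable (fun ω ↦ g (X ω) (T ω)) P) :
    ∫ ω, g (X ω) (T ω) ∂P = ∫ ω, ∫ t, g (X ω) t ∂ν ∂P := by
  have : IsFiniteMeasure ν := hT.isFiniteMeasure_iff.mp inferInstance
  have hXlaw : HasLaw X (P.map X) P := ⟨hX, rfl⟩
  have hpair := hXT.hasLaw_prod hXlaw hT
  have hint' : Integrable (Function.uncurry g) ((P.map X).prod ν) := by
    rw [← hpair.map_eq]
    exact (integrable_map_measure hg.aestronglyMeasurable hpair.aemeasurable).mpr hint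
  calc ∫ ω, g (X ω) (T ω) ∂P = ∫ p, Function.uncurry g p ∂(P.map X).prod ν :=
        hpair.integral_comp hg.aestronglyMeasurable
    _ = ∫ x, ∫ t, g x t ∂ν ∂P.map X := integral_prod _ hint'
    _ = ∫ ω, ∫ t, g (X ω) t ∂ν ∂P :=
        (hXlaw.integral_comp
          (hg.stronglyMeasurable.integral_prod_right' (ν := ν)).aestronglyMeasurable).symm

lemma IndepFun.integral_add_sq {Ω : Type*} {mΩ : MeasurableSpace Ω} {P : Measure Ω}
    [IsProbabilityMeasure P] {Y Z : Ω → ℝ} (hYZ : Y ⟂ᵢ[P] Z) (hY : MemLp Y 2 P)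
    (hZ : MemLp Z 2 P) :
    ∫ ω, (Y ω + Z ω) ^ 2 ∂P = ∫ ω, Y ω ^ 2 ∂P + 2 * (∫ ω, Y ω ∂P) * ∫ ω, Z ω ∂P
      + ∫ ω, Z ω ^ 2 ∂P := by
  have hY1 := hY.integrable one_le_two
  have hZ1 := hZ.integrable one_le_two
  have hYZ1 : Integrable (fun ω ↦ 2 * (Y ω * Z ω)) P := (hYZ.integrable_mul hY1 hZ1).const_mul 2
  have hexpand : (fun ω ↦ (Y ω + Z ω) ^ 2) = fun ω ↦ Y ω ^ 2 + 2 * (Y ω * Z ω) + Z ω ^ 2 := by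
    ext ω
    ring
  have hYsq_YZ : Integrable (fun ω ↦ Y ω ^ 2 + 2 * (Y ω * Z ω)) P := hY.integrable_sq.add hYZ1
  rw [hexpand, integral_add hYsq_YZ hZ.integrable_sq,
    integral_add hY.integrable_sq hYZ1, integral_const_mul,
    hYZ.integral_fun_mul_eq_mul_integral hY1.1 hZ1.1, mul_assoc]

section

variable {Ω : Type*} {mΩ : MeasurableSpace Ω} {P : Measure Ω} {X T : Ω → ℝ}

lemma integral_pow_of_hasLaw_expMeasure (hθ : 0 < θ) (hT : HasLaw T (expMeasure θ) P) (k : ℕ) :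
    ∫ ω, T ω ^ k ∂P = k ! / θ ^ k :=
  (hT.integral_comp (f := fun t ↦ t ^ k) (by fun_prop)).trans (integral_pow_expMeasure hθ k)

lemma memLp_two_of_hasLaw_expMeasure (hθ : 0 < θ) (hT : HasLaw T (expMeasure θ) P) :
    MemLp T 2 P := by
  have h : MemLp id 2 (expMeasure θ) :=
    (memLp_two_iff_integrable_sq aestronglyMeasurable_id).mpr (integrable_pow_expMeasure hθ 2)
  rw [← hT.map_eq] at h
  exact (memLp_map_measure_iff aestronglyMeasurable_id hT.aemeasurable).mp h

lemma integrable_exp_neg_mul_of_nonneg [IsFiniteMeasure P] (hθ : 0 ≤ θ) (hX : AEMeasurable X P)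
    (hX0 : ∀ᵐ ω ∂P, 0 ≤ X ω) :
    Integrable (fun ω ↦ exp (-θ * X ω)) P := by
  refine (integrable_const 1).mono' (by fun_prop) (hX0.mono fun ω hω ↦ ?_)
  rw [norm_of_nonneg (exp_pos _).le, exp_le_one_iff, neg_mul, neg_nonpos]
  exact mul_nonneg hθ hω

lemma norm_max_sub_le_of_hasLaw_expMeasure (hT : HasLaw T (expMeasure θ) P)
    (hX0 : ∀ᵐ ω ∂P, 0 ≤ X ω) : ∀ᵐ ω ∂P, ‖max (X ω - T ω) 0‖ ≤ ‖X ω‖ := by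
  have hT0 : ∀ᵐ ω ∂P, 0 ≤ T ω :=
    ae_of_ae_map hT.aemeasurable (hT.map_eq ▸ ae_nonneg_expMeasure θ)
  filter_upwards [hX0, hT0] with ω hXω hTω
  rw [norm_of_nonneg (le_max_right _ _), norm_of_nonneg hXω]
  exact max_le (by linarith) hXω

lemma integral_max_sub_of_hasLaw_expMeasure [IsProbabilityMeasure P] (hθ : 0 < θ)
    (hXT : X ⟂ᵢ[P] T) (hT : HasLaw T (expMeasure θ) P) (hX : Integrable X P)
    (hX0 : ∀ᵐ ω ∂P, 0 ≤ X ω) :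
    ∫ ω, max (X ω - T ω) 0 ∂P = ∫ ω, X ω ∂P - (1 - ∫ ω, exp (-θ * X ω) ∂P) / θ := by
  have hexp := integrable_exp_neg_mul_of_nonneg hθ.le hX.aemeasurable hX0
  have hdefect : Integrable (fun ω ↦ (1 - exp (-θ * X ω)) / θ) P :=
    ((integrable_const 1).sub hexp).div_const θ
  have hTm := hT.aemeasurable
  have hM : Integrable (fun ω ↦ max (X ω - T ω) 0) P :=
    hX.mono (by fun_prop) (norm_max_sub_le_of_hasLaw_expMeasure hT hX0)
  rw [hXT.integral_comp_eq_integral_integral hX.aemeasurable hT (g := fun x t ↦ max (x - t) 0)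
    (by fun_prop) hM,
    integral_congr_ae (hX0.mono fun ω hω ↦ integral_max_const_sub_expMeasure hθ hω),
    integral_sub hX hdefect, integral_div, integral_sub (integrable_const 1) hexp, integral_const,
    probReal_univ, one_smul]

lemma integral_max_sub_sq_of_hasLaw_expMeasure [IsProbabilityMeasure P] (hθ : 0 < θ)
    (hXT : X ⟂ᵢ[P] T) (hT : HasLaw T (expMeasure θ) P) (hX : MemLp X 2 P) (hX0 : ∀ᵐ ω ∂P, 0 ≤ X ω) :
    ∫ ω, max (X ω - T ω) 0 ^ 2 ∂P
      = ∫ ω, X ω ^ 2 ∂P - 2 * (∫ ω, X ω ∂P) / θ + 2 * (1 - ∫ ω, exp (-θ * X ω) ∂P) / θ ^ 2 := by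
  have hX1 := hX.integrable one_le_two
  have hexp := integrable_exp_neg_mul_of_nonneg hθ.le hX1.aemeasurable hX0
  have hdefect : Integrable (fun ω ↦ 2 * (1 - exp (-θ * X ω)) / θ ^ 2) P :=
    (((integrable_const 1).sub hexp).const_mul 2).div_const _
  have hTm := hT.aemeasurable
  have hM : MemLp (fun ω ↦ max (X ω - T ω) 0) 2 P :=
    hX.of_le (by fun_prop) (norm_max_sub_le_of_hasLaw_expMeasure hT hX0)
  have hlin : Integrable (fun ω ↦ X ω ^ 2 - 2 * X ω / θ) P :=
    hX.integrable_sq.sub ((hX1.const_mul 2).div_const θ)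
  rw [hXT.integral_comp_eq_integral_integral hX1.aemeasurable hT
    (g := fun x t ↦ max (x - t) 0 ^ 2) (by fun_prop) hM.integrable_sq,
    integral_congr_ae (hX0.mono fun ω hω ↦ integral_max_const_sub_sq_expMeasure hθ hω),
    integral_add hlin hdefect,
    integral_sub hX.integrable_sq ((hX1.const_mul 2).div_const θ), integral_div, integral_div,
    integral_const_mul, integral_const_mul, integral_sub (integrable_const 1) hexp, integral_const,
    probReal_univ, one_smul]

end

end ProbabilityTheory

open scoped ProbabilityTheory

/-- Second identity of Proposition 2: the second moment of the inter-departure time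
`Y = S + max (X - T) 0` in a stationary G/M/1 queue. -/
theorem second_moment_interdeparture
    {Ω : Type*} [MeasureSpace Ω] [IsProbabilityMeasure (ℙ : Measure Ω)]
    (μ ρ₁ : ℝ) (hμ : 0 < μ) (hρ : ρ₁ ∈ Set.Ioo (0 : ℝ) 1)
    (X T S : Ω → ℝ)
    (hXmeas : Measurable X) (hTmeas : Measurable T) (hSmeas : Measurable S)
    (hXnonneg : ∀ ω, 0 ≤ X ω) (hXsq : Integrable (fun ω => (X ω) ^ 2) ℙ)
    (hfix : ρ₁ = ∫ ω, Real.exp (-(μ * (1 - ρ₁)) * X ω) ∂ℙ)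
    (hTdist : Measure.map T ℙ = expMeasure (μ * (1 - ρ₁)))
    (hSdist : Measure.map S ℙ = expMeasure μ)
    (hindep : iIndepFun ![X, T, S] ℙ) :
    ∫ ω, (S ω + max (X ω - T ω) 0) ^ 2 ∂ℙ
      = (∫ ω, (X ω) ^ 2 ∂ℙ) - 2 * ρ₁ / (μ * (1 - ρ₁)) * ∫ ω, X ω ∂ℙ
          + 2 / (μ ^ 2 * (1 - ρ₁)) := by
  have h1ρ : 0 < 1 - ρ₁ := sub_pos.mpr hρ.2
  set ν := μ * (1 - ρ₁)
  have hν : 0 < ν := mul_pos hμ h1ρ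
  have hTlaw : HasLaw T (expMeasure ν) ℙ := ⟨hTmeas.aemeasurable, hTdist⟩
  have hSlaw : HasLaw S (expMeasure μ) ℙ := ⟨hSmeas.aemeasurable, hSdist⟩
  have hX : MemLp X 2 ℙ := (memLp_two_iff_integrable_sq hXmeas.aestronglyMeasurable).mpr hXsq
  have hX0 : ∀ᵐ ω ∂ℙ, 0 ≤ X ω := ae_of_all _ hXnonneg
  have hXT : X ⟂ᵢ T := hindep.indepFun (i := 0) (j := 1) (by decide)
  have hMS : (fun ω ↦ max (X ω - T ω) 0) ⟂ᵢ S := by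
    have hmeas : ∀ i, Measurable (![X, T, S] i) := fun i ↦ by fin_cases i <;> assumption
    exact (hindep.indepFun_prodMk hmeas 0 1 2 (by decide) (by decide)).comp
      ((measurable_fst.sub measurable_snd).max measurable_const) measurable_id
  have hM : MemLp (fun ω ↦ max (X ω - T ω) 0) 2 ℙ :=
    hX.of_le (by fun_prop) (norm_max_sub_le_of_hasLaw_expMeasure hTlaw hX0)
  have hES : ∫ ω, S ω ∂ℙ = 1 / μ := by
    simpa using integral_pow_of_hasLaw_expMeasure hμ hSlaw 1
  rw [hMS.symm.integral_add_sq (memLp_two_of_hasLaw_expMeasure hμ hSlaw) hM, hES,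
    integral_pow_of_hasLaw_expMeasure hμ hSlaw 2,
    integral_max_sub_of_hasLaw_expMeasure hν hXT hTlaw (hX.integrable one_le_two) hX0,
    integral_max_sub_sq_of_hasLaw_expMeasure hν hXT hTlaw hX hX0, ← hfix]
  field_simp
  ring
end

section
/- Let μ > 0 and let X be a nonnegative integrable random variable. Let ρ₁ ∈ (0,1) satisfy ρ₁ = E[e^{−μ(1−ρ₁)X}], and set q₁ = E[X e^{−μ(1−ρ₁)X}]. Let T ~ Exp(μ(1−ρ₁)) and S ~ Exp(μ), with X, T, S mutually independent, and set Y = S + max(X − T, 0). Then E[T·Y] = E[X]/(μ(1−ρ₁)) − 1/(μ²(1−ρ₁)) + q₁/(μ(1−ρ₁)). -/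
open MeasureTheory ProbabilityTheory
open scoped ProbabilityTheory

/-!
Write `ν = μ(1-ρ₁)`. By independence, `E[T S] = E[T] E[S] = 1/(νμ)`. For the other term, Fubini
over the joint law `law(X) ⊗ Exp(ν)` of `(X, T)` reduces `E[T (X - T)⁺]` to the expectation of
`∫₀ˣ ν e^{-νt} t (x - t) dt = x/ν - 2/ν² + x e^{-νx}/ν + 2 e^{-νx}/ν²` at `x = X`. Taking
expectations brings in `E[X]`, `q₁` and `E[e^{-νX}] = ρ₁`, and then
`1/(νμ) - 2(1-ρ₁)/ν² = -1/(μ²(1-ρ₁))`.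
-/

namespace ProbabilityTheory

open Real Set

variable {ν : ℝ}

lemma expMeasure_eq_withDensity_s4 (ν : ℝ) :
    expMeasure ν = volume.withDensity (exponentialPDF ν) := rfl

lemma ae_nonneg_expMeasure_s4 (ν : ℝ) : ∀ᵐ x ∂expMeasure ν, 0 ≤ x := by
  simp_rw [ae_iff, not_le]
  change expMeasure ν (Iio 0) = 0
  rw [expMeasure_eq_withDensity_s4, withDensity_apply _ measurableSet_Iio]
  exact lintegral_exponentialPDF_of_nonpos le_rfl

lemma measurable_exponentialPDF (ν : ℝ) : Measurable (exponentialPDF ν) :=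
  (measurable_exponentialPDFReal ν).ennreal_ofReal

lemma toReal_exponentialPDF_smul_eq_indicator (hν : 0 ≤ ν) (g : ℝ → ℝ) :
    (fun x => (exponentialPDF ν x).toReal • g x)
      = (Ici 0).indicator (fun x => ν * exp (-(ν * x)) * g x) := by
  ext x
  by_cases hx : 0 ≤ x
  · rw [indicator_of_mem (mem_Ici.mpr hx), exponentialPDF_of_nonneg hx,
      ENNReal.toReal_ofReal (by positivity), smul_eq_mul]
  · rw [indicator_of_notMem (by simpa using hx), exponentialPDF_of_neg (not_le.mp hx)]
    simp

lemma integral_expMeasure_s4 (hν : 0 ≤ ν) (g : ℝ → ℝ) :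
    ∫ x, g x ∂expMeasure ν = ∫ x in Ioi 0, ν * exp (-(ν * x)) * g x := by
  rw [expMeasure_eq_withDensity_s4, integral_withDensity_eq_integral_toReal_smul
      (measurable_exponentialPDF ν) (ae_of_all _ fun _ => ENNReal.ofReal_lt_top),
    toReal_exponentialPDF_smul_eq_indicator hν, integral_indicator measurableSet_Ici,
    integral_Ici_eq_integral_Ioi]

lemma integral_id_expMeasure (hν : 0 < ν) : ∫ x, x ∂expMeasure ν = ν⁻¹ := by
  have h := integral_rpow_mul_exp_neg_mul_Ioi two_pos hν
  norm_num [Gamma_two] at h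
  rw [integral_expMeasure_s4 hν.le]
  simp_rw [mul_assoc, mul_comm (exp _), integral_const_mul, h]
  field_simp

lemma integrable_id_expMeasure (hν : 0 < ν) : Integrable (fun x => x) (expMeasure ν) :=
  .of_integral_ne_zero (by rw [integral_id_expMeasure hν]; positivity)

lemma hasDerivAt_exp_mul_quadratic (hν : ν ≠ 0) (x t : ℝ) :
    HasDerivAt (fun t => exp (-(ν * t)) * (t ^ 2 + (2 / ν - x) * t + (2 / ν ^ 2 - x / ν)))
      (ν * exp (-(ν * t)) * (t * (x - t))) t := by
  have hlin : HasDerivAt (fun t => -(ν * t)) (-ν) t := by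
    simpa using ((hasDerivAt_id t).const_mul ν).fun_neg
  have hquad : HasDerivAt (fun t => t ^ 2 + (2 / ν - x) * t + (2 / ν ^ 2 - x / ν))
      (2 * t + (2 / ν - x)) t := by
    simpa using ((hasDerivAt_pow 2 t).add ((hasDerivAt_id t).const_mul (2 / ν - x))).add_const
      (2 / ν ^ 2 - x / ν)
  refine (hlin.exp.mul hquad).congr_deriv ?_
  field_simp
  ring

lemma integral_mul_max_sub_expMeasure (hν : 0 < ν) {x : ℝ} (hx : 0 ≤ x) :
    ∫ t, t * max (x - t) 0 ∂expMeasure ν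
      = x / ν - 2 / ν ^ 2 + x * exp (-ν * x) / ν + 2 * exp (-ν * x) / ν ^ 2 := by
  have hvanish : ∀ t ∈ Ioi 0 \ Ioc 0 x, ν * exp (-(ν * t)) * (t * max (x - t) 0) = 0 := by
    rintro t ⟨ht0, htx⟩
    have : x < t := not_le.mp fun h => htx ⟨ht0, h⟩
    rw [max_eq_right (by linarith), mul_zero, mul_zero]
  rw [integral_expMeasure_s4 hν.le,
    setIntegral_eq_of_subset_of_forall_sdiff_eq_zero measurableSet_Ioi Ioc_subset_Ioi_self hvanish,
    setIntegral_congr_fun measurableSet_Ioc (fun t ht => by rw [max_eq_left (sub_nonneg.mpr ht.2)]),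
    ← intervalIntegral.integral_of_le hx,
    intervalIntegral.integral_eq_sub_of_hasDerivAt
      (fun t _ => hasDerivAt_exp_mul_quadratic hν.ne' x t)
      ((by fun_prop : Continuous _).intervalIntegrable _ _)]
  simp only [mul_zero, neg_zero, exp_zero, neg_mul]
  field_simp
  ring

variable {Ω : Type*} {mΩ : MeasurableSpace Ω} {P : Measure Ω}

lemma HasLaw.ae_nonneg_of_expMeasure {T : Ω → ℝ} (hT : HasLaw T (expMeasure ν) P) :
    ∀ᵐ ω ∂P, 0 ≤ T ω :=
  ae_of_ae_map hT.aemeasurable (hT.map_eq ▸ ae_nonneg_expMeasure_s4 ν)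

lemma HasLaw.integrable_of_expMeasure (hν : 0 < ν) {T : Ω → ℝ}
    (hT : HasLaw T (expMeasure ν) P) : Integrable T P :=
  (integrable_map_measure aestronglyMeasurable_id hT.aemeasurable).mp
    (hT.map_eq ▸ integrable_id_expMeasure hν)

lemma HasLaw.integral_eq_inv_of_expMeasure (hν : 0 < ν) {T : Ω → ℝ}
    (hT : HasLaw T (expMeasure ν) P) : ∫ ω, T ω ∂P = ν⁻¹ :=
  hT.integral_eq.trans (integral_id_expMeasure hν)

lemma ae_norm_exp_neg_mul_le_one (hν : 0 ≤ ν) {X : Ω → ℝ} (hX0 : ∀ᵐ ω ∂P, 0 ≤ X ω) :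
    ∀ᵐ ω ∂P, ‖exp (-ν * X ω)‖ ≤ 1 := by
  filter_upwards [hX0] with ω hω
  rw [norm_of_nonneg (exp_nonneg _), exp_le_one_iff, neg_mul, neg_nonpos]
  exact mul_nonneg hν hω

lemma IndepFun.integrable_mul_max_sub (hν : 0 < ν) {X T : Ω → ℝ}
    (hX : AEMeasurable X P) (hX0 : ∀ᵐ ω ∂P, 0 ≤ X ω) (hXint : Integrable X P)
    (hT : HasLaw T (expMeasure ν) P) (hXT : X ⟂ᵢ[P] T) :
    Integrable (fun ω => T ω * max (X ω - T ω) 0) P := by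
  have hTmeas := hT.aemeasurable
  refine (hXT.integrable_mul hXint (hT.integrable_of_expMeasure hν)).mono' (by fun_prop) ?_
  filter_upwards [hX0, hT.ae_nonneg_of_expMeasure] with ω hXω hTω
  rw [norm_mul, norm_of_nonneg hTω, norm_of_nonneg (le_max_right _ _), Pi.mul_apply,
    mul_comm (X ω)]
  exact mul_le_mul_of_nonneg_left (max_le (by linarith : X ω - T ω ≤ X ω) hXω) hTω

lemma IndepFun.integral_mul_max_sub [IsProbabilityMeasure P] (hν : 0 < ν) {X T : Ω → ℝ}
    (hX : AEMeasurable X P) (hX0 : ∀ᵐ ω ∂P, 0 ≤ X ω) (hXint : Integrable X P)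
    (hT : HasLaw T (expMeasure ν) P) (hXT : X ⟂ᵢ[P] T) :
    ∫ ω, T ω * max (X ω - T ω) 0 ∂P
      = (∫ ω, X ω ∂P) / ν - 2 / ν ^ 2 + (∫ ω, X ω * exp (-ν * X ω) ∂P) / ν
          + 2 * (∫ ω, exp (-ν * X ω) ∂P) / ν ^ 2 := by
  have hXlaw : HasLaw X (P.map X) P := ⟨hX, rfl⟩
  have hjoint := hXT.hasLaw_prod hXlaw hT
  have hφ : Continuous fun p : ℝ × ℝ => p.2 * max (p.1 - p.2) 0 := by fun_prop
  have hφint : Integrable (fun p : ℝ × ℝ => p.2 * max (p.1 - p.2) 0)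
      ((P.map X).prod (expMeasure ν)) := by
    rw [← hjoint.map_eq, integrable_map_measure hφ.aestronglyMeasurable hjoint.aemeasurable]
    exact hXT.integrable_mul_max_sub hν hX hX0 hXint hT
  have := isProbabilityMeasure_expMeasure hν
  have hX0' : ∀ᵐ x ∂P.map X, 0 ≤ x := (ae_map_iff hX measurableSet_Ici).mpr hX0
  calc ∫ ω, T ω * max (X ω - T ω) 0 ∂P
      = ∫ x, ∫ t, t * max (x - t) 0 ∂expMeasure ν ∂P.map X := by
        rw [← integral_prod _ hφint]
        exact hjoint.integral_comp hφ.aestronglyMeasurable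
    _ = ∫ x, (x / ν - 2 / ν ^ 2 + x * exp (-ν * x) / ν + 2 * exp (-ν * x) / ν ^ 2) ∂P.map X :=
        integral_congr_ae (hX0'.mono fun x hx => integral_mul_max_sub_expMeasure hν hx)
    _ = ∫ ω, (X ω / ν - 2 / ν ^ 2 + X ω * exp (-ν * X ω) / ν + 2 * exp (-ν * X ω) / ν ^ 2) ∂P :=
        (hXlaw.integral_comp (by fun_prop)).symm
    _ = _ := by
        have hbound := ae_norm_exp_neg_mul_le_one hν.le hX0
        have hE : Integrable (fun ω => exp (-ν * X ω)) P := .of_bound (by fun_prop) 1 hbound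
        have hXE := hXint.mul_bdd (by fun_prop) hbound
        rw [integral_add (by fun_prop) (by fun_prop), integral_add (by fun_prop) (by fun_prop),
          integral_sub (by fun_prop) (by fun_prop)]
        simp only [integral_div, integral_const_mul, integral_const, probReal_univ, one_smul]

end ProbabilityTheory

/-- Third identity of Proposition 2: the cross-correlation between the system time `T`
and the inter-departure time `Y = S + max (X - T) 0` in a stationary G/M/1 queue. -/
theorem cross_correlation_systemTime_interdeparture
    {Ω : Type*} [MeasureSpace Ω] [IsProbabilityMeasure (ℙ : Measure Ω)]
    (μ ρ₁ : ℝ) (hμ : 0 < μ) (hρ : ρ₁ ∈ Set.Ioo (0 : ℝ) 1)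
    (X T S : Ω → ℝ)
    (hXmeas : Measurable X) (hTmeas : Measurable T) (hSmeas : Measurable S)
    (hXnonneg : ∀ ω, 0 ≤ X ω) (hXint : Integrable X ℙ)
    (hfix : ρ₁ = ∫ ω, Real.exp (-(μ * (1 - ρ₁)) * X ω) ∂ℙ)
    (hTdist : Measure.map T ℙ = expMeasure (μ * (1 - ρ₁)))
    (hSdist : Measure.map S ℙ = expMeasure μ)
    (hindep : iIndepFun ![X, T, S] ℙ) :
    ∫ ω, T ω * (S ω + max (X ω - T ω) 0) ∂ℙ
      = (∫ ω, X ω ∂ℙ) / (μ * (1 - ρ₁)) - 1 / (μ ^ 2 * (1 - ρ₁))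
          + (∫ ω, X ω * Real.exp (-(μ * (1 - ρ₁)) * X ω) ∂ℙ) / (μ * (1 - ρ₁)) := by
  have h1ρ : 0 < 1 - ρ₁ := sub_pos.mpr hρ.2
  set ν := μ * (1 - ρ₁) with hν_def
  have hν : 0 < ν := mul_pos hμ h1ρ
  have hT : HasLaw T (expMeasure ν) ℙ := ⟨hTmeas.aemeasurable, hTdist⟩
  have hS : HasLaw S (expMeasure μ) ℙ := ⟨hSmeas.aemeasurable, hSdist⟩
  have hXT : X ⟂ᵢ[ℙ] T := hindep.indepFun (i := 0) (j := 1) (by decide)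
  have hTS : T ⟂ᵢ[ℙ] S := hindep.indepFun (i := 1) (j := 2) (by decide)
  have hX0 : ∀ᵐ ω ∂ℙ, 0 ≤ X ω := ae_of_all _ hXnonneg
  have hTmax := hXT.integral_mul_max_sub hν hXmeas.aemeasurable hX0 hXint hT
  rw [← hfix] at hTmax
  calc ∫ ω, T ω * (S ω + max (X ω - T ω) 0) ∂ℙ
      = (∫ ω, T ω * S ω ∂ℙ) + ∫ ω, T ω * max (X ω - T ω) 0 ∂ℙ := by
        simp_rw [mul_add]
        exact integral_add
          (hTS.integrable_mul (hT.integrable_of_expMeasure hν) (hS.integrable_of_expMeasure hμ))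
          (hXT.integrable_mul_max_sub hν hXmeas.aemeasurable hX0 hXint hT)
    _ = ν⁻¹ * μ⁻¹ + ((∫ ω, X ω ∂ℙ) / ν - 2 / ν ^ 2
          + (∫ ω, X ω * Real.exp (-ν * X ω) ∂ℙ) / ν + 2 * ρ₁ / ν ^ 2) := by
        rw [hTS.integral_fun_mul_eq_mul_integral hTmeas.aestronglyMeasurable
          hSmeas.aestronglyMeasurable, hT.integral_eq_inv_of_expMeasure hν,
          hS.integral_eq_inv_of_expMeasure hμ, hTmax]
    _ = _ := by
        rw [hν_def]
        field_simp
        ring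
end

section
/- Let μ > 0, ν > 0 and let X be a nonnegative random variable. Let ρ₁ ∈ (0,1) satisfy ρ₁ = E[e^{−μ(1−ρ₁)X}], set q₀ = E[e^{−νX}], and assume ν ≠ μ(1−ρ₁). Let T ~ Exp(μ(1−ρ₁)) and S ~ Exp(μ), with X, T, S mutually independent, and set Y = S + max(X − T, 0). Then E[e^{−νY}] = μ·(μ(1−ρ₁)q₀ − νρ₁) / ((μ+ν)(μ(1−ρ₁) − ν)). -/
/-!
Conditionally on `X = x ≥ 0`, the idle period `max (x - T) 0` with `T ~ Exp(α)` has Laplace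
transform `(α e^{-νx} - ν e^{-αx}) / (α - ν)`. Averaging over `X` turns `E[e^{-αX}]` into `ρ₁` by
the fixed-point equation, and the independent service time `S` contributes the factor
`μ / (μ + ν)`.
-/

open MeasureTheory ProbabilityTheory Real Set

lemma integral_expMeasure_eq_setIntegral {r : ℝ} (hr : 0 < r) (g : ℝ → ℝ) :
    ∫ x, g x ∂expMeasure r = ∫ x in Ioi 0, r * exp (-r * x) * g x := by
  have hpdf : (fun x => (exponentialPDF r x).toReal • g x)
      = (Ici 0).indicator (fun x => r * exp (-r * x) * g x) := by
    ext x
    by_cases hx : 0 ≤ x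
    · simp [exponentialPDF_of_nonneg hx, hx, hr.le, (exp_pos _).le, neg_mul]
    · simp [exponentialPDF_of_neg (not_le.mp hx), hx]
  change ∫ x, g x ∂volume.withDensity (exponentialPDF r) = _
  rw [integral_withDensity_eq_integral_toReal_smul (f := exponentialPDF r)
      (by unfold exponentialPDF; fun_prop) (ae_of_all _ fun _ => ENNReal.ofReal_lt_top),
    hpdf, integral_indicator measurableSet_Ici, integral_Ici_eq_integral_Ioi]

lemma integral_exp_neg_mul_expMeasure {r c : ℝ} (hr : 0 < r) (hrc : 0 < r + c) :
    ∫ x, exp (-c * x) ∂expMeasure r = r / (r + c) := by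
  rw [integral_expMeasure_eq_setIntegral hr]
  have h : ∀ x, r * exp (-r * x) * exp (-c * x) = r * exp (-(r + c) * x) := fun x => by
    rw [mul_assoc, ← exp_add]; ring_nf
  simp_rw [h]
  rw [integral_const_mul, integral_exp_mul_Ioi (by linarith) 0, mul_zero, exp_zero]
  field_simp

lemma intervalIntegral_exp_mul {c : ℝ} (hc : c ≠ 0) (a b : ℝ) :
    ∫ t in a..b, exp (c * t) = (exp (c * b) - exp (c * a)) / c := by
  rw [intervalIntegral.integral_comp_mul_left (fun t => exp t) hc, integral_exp, smul_eq_mul,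
    inv_mul_eq_div]

lemma integral_exp_neg_mul_max_sub_expMeasure {α ν x : ℝ} (hα : 0 < α) (hne : α ≠ ν)
    (hx : 0 ≤ x) :
    ∫ t, exp (-ν * max (x - t) 0) ∂expMeasure α
      = (α * exp (-ν * x) - ν * exp (-α * x)) / (α - ν) := by
  set f := fun t => α * exp (-α * t) * exp (-ν * max (x - t) 0)
  have hf_Ioc : EqOn f (fun t => α * exp (-ν * x) * exp ((ν - α) * t)) (Ioc 0 x) := by
    intro t ht
    simp only [f, max_eq_left (sub_nonneg.mpr ht.2), mul_assoc, ← exp_add]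
    ring_nf
  have hf_Ioi : EqOn f (fun t => α * exp (-α * t)) (Ioi x) := by
    intro t ht
    simp [f, max_eq_right (sub_nonpos.mpr (mem_Ioi.mp ht).le)]
  have hint_Ioi : IntegrableOn (fun t => α * exp (-α * t)) (Ioi x) :=
    (exp_neg_integrableOn_Ioi x hα).const_mul α
  have hf_cont : Continuous f := by fun_prop
  rw [integral_expMeasure_eq_setIntegral hα, ← Ioc_union_Ioi_eq_Ioi hx,
    setIntegral_union (Ioc_disjoint_Ioi le_rfl) measurableSet_Ioi hf_cont.integrableOn_Ioc
      (hint_Ioi.congr_fun hf_Ioi.symm measurableSet_Ioi),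
    setIntegral_congr_fun measurableSet_Ioc hf_Ioc, setIntegral_congr_fun measurableSet_Ioi hf_Ioi,
    integral_const_mul, integral_const_mul, ← intervalIntegral.integral_of_le hx,
    intervalIntegral_exp_mul (sub_ne_zero.mpr hne.symm), integral_exp_mul_Ioi (by linarith)]
  have hexp : exp (-ν * x) * exp ((ν - α) * x) = exp (-α * x) := by
    rw [← exp_add]; ring_nf
  simp only [mul_zero, exp_zero, neg_mul] at hexp ⊢
  field_simp [sub_ne_zero.mpr hne, sub_ne_zero.mpr hne.symm]
  linear_combination (norm := ring_nf) (α * (α - ν)) * hexp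

section

variable {Ω : Type*} [MeasurableSpace Ω] {P : Measure Ω}

lemma integrable_exp_neg_mul_of_nonneg [IsFiniteMeasure P] {Z : Ω → ℝ}
    (hZ : AEStronglyMeasurable Z P) (hZ0 : ∀ᵐ ω ∂P, 0 ≤ Z ω) {c : ℝ} (hc : 0 ≤ c) :
    Integrable (fun ω => exp (-c * Z ω)) P := by
  refine .of_bound (by fun_prop) 1 ?_
  filter_upwards [hZ0] with ω hω
  rw [norm_of_nonneg (exp_pos _).le, exp_le_one_iff]
  nlinarith

lemma ProbabilityTheory.IndepFun.integral_comp_prodMk [IsFiniteMeasure P]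
    {𝓧 𝓨 E : Type*} [MeasurableSpace 𝓧] [MeasurableSpace 𝓨]
    [NormedAddCommGroup E] [NormedSpace ℝ E]
    {X : Ω → 𝓧} {Y : Ω → 𝓨} (hXY : IndepFun X Y P) (hX : AEMeasurable X P)
    (hY : AEMeasurable Y P) {f : 𝓧 × 𝓨 → E} (hf : Integrable f ((P.map X).prod (P.map Y))) :
    ∫ ω, f (X ω, Y ω) ∂P = ∫ ω, ∫ y, f (X ω, y) ∂P.map Y ∂P := by
  have hmap := (indepFun_iff_map_prod_eq_prod_map_map hX hY).mp hXY
  rw [← integral_map (hX.prodMk hY) (hmap ▸ hf.aestronglyMeasurable), hmap, integral_prod _ hf,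
    integral_map hX hf.integral_prod_left.aestronglyMeasurable]

lemma integral_exp_neg_mul_max_sub_of_indepFun [IsProbabilityMeasure P] {X T : Ω → ℝ}
    {α ν : ℝ} (hα : 0 < α) (hν : 0 < ν) (hne : α ≠ ν) (hXT : IndepFun X T P)
    (hX : Measurable X) (hT : Measurable T) (hX0 : ∀ᵐ ω ∂P, 0 ≤ X ω)
    (hTlaw : P.map T = expMeasure α) :
    ∫ ω, exp (-ν * max (X ω - T ω) 0) ∂P
      = (α * ∫ ω, exp (-ν * X ω) ∂P - ν * ∫ ω, exp (-α * X ω) ∂P) / (α - ν) := by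
  have hint : Integrable (fun p : ℝ × ℝ => exp (-ν * max (p.1 - p.2) 0))
      ((P.map X).prod (P.map T)) :=
    integrable_exp_neg_mul_of_nonneg (by fun_prop) (ae_of_all _ fun _ => le_max_right _ _) hν.le
  have hXmeas : AEStronglyMeasurable X P := hX.aestronglyMeasurable
  rw [hXT.integral_comp_prodMk hX.aemeasurable hT.aemeasurable hint, hTlaw,
    integral_congr_ae (hX0.mono fun ω hω => integral_exp_neg_mul_max_sub_expMeasure hα hne hω),
    integral_div, integral_sub, integral_const_mul, integral_const_mul]
  · exact (integrable_exp_neg_mul_of_nonneg hXmeas hX0 hν.le).const_mul α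
  · exact (integrable_exp_neg_mul_of_nonneg hXmeas hX0 hα.le).const_mul ν

end

/-- Proposition 3: the missing probability `E[exp (-ν Y)]` of an update in a G/M/1/M
update-and-decide system, where `Y = S + max (X - T) 0` is the inter-departure time. -/
theorem missing_probability_GM1M
    {Ω : Type*} [MeasureSpace Ω] [IsProbabilityMeasure (ℙ : Measure Ω)]
    (μ ν ρ₁ : ℝ) (hμ : 0 < μ) (hν : 0 < ν) (hρ : ρ₁ ∈ Set.Ioo (0 : ℝ) 1)
    (hνne : ν ≠ μ * (1 - ρ₁))
    (X T S : Ω → ℝ)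
    (hXmeas : Measurable X) (hTmeas : Measurable T) (hSmeas : Measurable S)
    (hXnonneg : ∀ ω, 0 ≤ X ω)
    (hfix : ρ₁ = ∫ ω, Real.exp (-(μ * (1 - ρ₁)) * X ω) ∂ℙ)
    (hTdist : Measure.map T ℙ = expMeasure (μ * (1 - ρ₁)))
    (hSdist : Measure.map S ℙ = expMeasure μ)
    (hindep : iIndepFun ![X, T, S] ℙ) :
    ∫ ω, Real.exp (-ν * (S ω + max (X ω - T ω) 0)) ∂ℙ
      = μ * (μ * (1 - ρ₁) * (∫ ω, Real.exp (-ν * X ω) ∂ℙ) - ν * ρ₁)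
          / ((μ + ν) * (μ * (1 - ρ₁) - ν)) := by
  have hα : 0 < μ * (1 - ρ₁) := mul_pos hμ (by linarith [hρ.2])
  have hmeas : ∀ i, Measurable (![X, T, S] i) := fun i => by fin_cases i <;> assumption
  have hS : ∫ ω, exp (-ν * S ω) ∂ℙ = μ / (μ + ν) := by
    rw [← integral_map (f := fun s => exp (-ν * s)) hSmeas.aemeasurable (by fun_prop), hSdist,
      integral_exp_neg_mul_expMeasure hμ (by linarith)]
  have hfactor : ∫ ω, exp (-ν * (S ω + max (X ω - T ω) 0)) ∂ℙ
      = (∫ ω, exp (-ν * max (X ω - T ω) 0) ∂ℙ) * ∫ ω, exp (-ν * S ω) ∂ℙ := by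
    simp_rw [mul_add, exp_add, mul_comm (exp (-ν * S _))]
    exact (hindep.indepFun_prodMk hmeas 0 1 2 (by decide) (by decide)).integral_fun_comp_mul_comp
      (f := fun p : ℝ × ℝ => exp (-ν * max (p.1 - p.2) 0)) (g := fun s => exp (-ν * s))
      (by fun_prop) hSmeas.aemeasurable (by fun_prop) (by fun_prop)
  have hXT : IndepFun X T ℙ := hindep.indepFun (show (0 : Fin 3) ≠ 1 by decide)
  rw [hfactor, hS, integral_exp_neg_mul_max_sub_of_indepFun hα hν hνne.symm hXT hXmeas hTmeas
    (ae_of_all _ hXnonneg) hTdist, ← hfix]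
  have hμν : μ + ν ≠ 0 := by positivity
  have hαν : μ * (1 - ρ₁) - ν ≠ 0 := sub_ne_zero.mpr hνne.symm
  field_simp
end

section
/- Let 0 < λ < μ, let ρ₁ ∈ (0,1) satisfy ρ₁ = e^{−μ(1−ρ₁)/λ}, let m₀ ≥ 1 be an integer, and set ν = m₀λ and w₁ = e^{−μ(1−ρ₁)/ν}. Let T ~ Exp(μ(1−ρ₁)) and S ~ Exp(μ) be independent. Then E[ ∑_{j=1}^{∞} (j/ν)·1{ T < j/ν ≤ max(T, 1/λ) + S } ] = m₀·( (1+m₀)/(2ν) + w₁/(ν(1−w₁)) ). -/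
/-!
A decision at time `τ` counts towards the cycle of update `k - 1` exactly when
`T < τ ≤ max T (1 / λ) + S`. Conditioning on `T` and using the exponential tail of `S`, this
event has probability `exp (-α (τ - 1/λ)⁺) - exp (-α τ)` with `α = μ (1 - ρ₁)`: the fixed-point
equation for `ρ₁`, read as `exp (-α / λ) = 1 - α / μ`, is exactly what collapses the integral
to this form. On the grid `τ = (j + 1) / ν` both terms are powers of `w₁ = exp (-α / ν)`, so
the expectation is an arithmetico-geometric series.
-/

open MeasureTheory ProbabilityTheory
open scoped ProbabilityTheory Classical
open Real Set

theorem sum_range_natCast_add_one (n : ℕ) :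
    ∑ j ∈ Finset.range n, ((j : ℝ) + 1) = n * (n + 1) / 2 := by
  induction n with
  | zero => simp
  | succ k ih => rw [Finset.sum_range_succ, ih]; push_cast; ring

theorem hasSum_succ_mul_pow_tsub_sub_pow {w : ℝ} (hw0 : 0 ≤ w) (hw1 : w < 1) (m : ℕ) :
    HasSum (fun j : ℕ => ((j : ℝ) + 1) * (w ^ (j + 1 - m) - w ^ (j + 1)))
      (m * (m + 1) / 2 + m * (w / (1 - w))) := by
  have hw : ‖w‖ < 1 := by rwa [norm_of_nonneg hw0]
  have hgeom : HasSum (fun j : ℕ => w ^ (j + 1)) (w / (1 - w)) := by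
    simpa only [pow_succ', div_eq_mul_inv] using (hasSum_geometric_of_lt_one hw0 hw1).mul_left w
  have hmoment : HasSum (fun j : ℕ => ((j : ℝ) + 1) * w ^ (j + 1)) (w / (1 - w) ^ 2) := by
    have := (hasSum_nat_add_iff' (f := fun n : ℕ => (n : ℝ) * w ^ n) 1).mpr
      (hasSum_coe_mul_geometric_of_norm_lt_one hw)
    simpa only [Finset.range_one, Finset.sum_singleton, Nat.cast_zero, zero_mul, sub_zero,
      Nat.cast_add, Nat.cast_one] using this
  have hshifted : HasSum (fun j : ℕ => ((j : ℝ) + 1) * w ^ (j + 1 - m))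
      (m * (m + 1) / 2 + (m * (w / (1 - w)) + w / (1 - w) ^ 2)) := by
    have head : ∑ j ∈ Finset.range m, ((j : ℝ) + 1) * w ^ (j + 1 - m) = m * (m + 1) / 2 := by
      rw [← sum_range_natCast_add_one]
      refine Finset.sum_congr rfl fun j hj => ?_
      rw [Nat.sub_eq_zero_of_le (Finset.mem_range.mp hj), pow_zero, mul_one]
    have tail : (fun j : ℕ => (((j + m : ℕ) : ℝ) + 1) * w ^ (j + m + 1 - m))
        = fun j : ℕ => m * w ^ (j + 1) + ((j : ℝ) + 1) * w ^ (j + 1) := by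
      ext j
      rw [show j + m + 1 - m = j + 1 by omega]
      push_cast; ring
    rw [← hasSum_nat_add_iff' m, head, add_sub_cancel_left, tail]
    exact (hgeom.mul_left _).add hmoment
  simpa only [mul_sub, ← add_assoc, add_sub_cancel_right] using hshifted.sub hmoment

theorem exp_neg_mul_natCast_div (β ν : ℝ) (n : ℕ) :
    exp (-(β * (n / ν))) = exp (-(β / ν)) ^ n := by
  rw [← exp_nat_mul]
  ring_nf

theorem exp_neg_mul_max_natCast_div_sub {β ν : ℝ} (hν : 0 < ν) (n m : ℕ) :
    exp (-(β * max (n / ν - m / ν) 0)) = exp (-(β / ν)) ^ (n - m) := by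
  have hmax : max ((n : ℝ) / ν - m / ν) 0 = ((n - m : ℕ) : ℝ) / ν := by
    rw [← sub_div]
    rcases le_total m n with h | h
    · rw [Nat.cast_sub h, max_eq_left (div_nonneg (sub_nonneg.mpr (by exact_mod_cast h)) hν.le)]
    · rw [Nat.sub_eq_zero_of_le h, Nat.cast_zero, zero_div,
        max_eq_right (div_nonpos_of_nonpos_of_nonneg (sub_nonpos.mpr (by exact_mod_cast h)) hν.le)]
  rw [hmax, ← exp_nat_mul]
  ring_nf

theorem lintegral_expMeasure (r : ℝ) {f : ℝ → ENNReal} (hf : Measurable f) :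
    ∫⁻ x, f x ∂expMeasure r = ∫⁻ x in Ici 0, ENNReal.ofReal (r * exp (-(r * x))) * f x := by
  rw [show expMeasure r = volume.withDensity (exponentialPDF r) from rfl,
    lintegral_withDensity_eq_lintegral_mul _ (f := exponentialPDF r)
      (measurable_exponentialPDFReal r).ennreal_ofReal hf,
    ← lintegral_indicator measurableSet_Ici]
  refine lintegral_congr fun x => ?_
  by_cases hx : 0 ≤ x
  · rw [indicator_of_mem (mem_Ici.mpr hx), Pi.mul_apply, exponentialPDF_of_nonneg hx]
  · rw [indicator_of_notMem (by simpa using hx), Pi.mul_apply,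
      exponentialPDF_of_neg (not_le.mp hx), zero_mul]

theorem expMeasure_Ici {r : ℝ} (hr : 0 < r) (a : ℝ) :
    expMeasure r (Ici a) = ENNReal.ofReal (exp (-(r * max a 0))) := by
  have : IsProbabilityMeasure (expMeasure r) := isProbabilityMeasure_expMeasure hr
  have : NullSingletonClass (expMeasure r) :=
    ⟨fun x => withDensity_absolutelyContinuous _ _ (measure_singleton x)⟩
  rw [measure_congr Ioi_ae_eq_Ici.symm, ← compl_Iic, prob_compl_eq_one_sub measurableSet_Iic,
    ← ofReal_cdf, cdf_expMeasure_eq hr]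
  split_ifs with ha
  · have hcdf : 0 ≤ 1 - exp (-(r * a)) :=
      sub_nonneg.mpr (exp_le_one_iff.mpr (neg_nonpos.mpr (mul_nonneg hr.le ha)))
    rw [max_eq_left ha, ← ENNReal.ofReal_one, ← ENNReal.ofReal_sub _ hcdf, sub_sub_cancel]
  · simp [max_eq_right (le_of_not_ge ha)]

theorem integral_mul_exp_neg_mul (α a b : ℝ) :
    ∫ t in a..b, α * exp (-(α * t)) = exp (-(α * a)) - exp (-(α * b)) := by
  rw [intervalIntegral.integral_eq_sub_of_hasDerivAt (fun t _ => hasDerivAt_neg_exp_mul_exp)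
    (by apply Continuous.intervalIntegrable; fun_prop)]
  ring

theorem integral_exp_mul_add {b : ℝ} (hb : b ≠ 0) (a x y : ℝ) :
    ∫ t in x..y, exp (b * t + a) = (exp (b * y + a) - exp (b * x + a)) / b := by
  rw [intervalIntegral.integral_comp_mul_add (fun t => exp t) hb, integral_exp, smul_eq_mul,
    inv_mul_eq_div]

def decisionWindow (c τ : ℝ) : Set (ℝ × ℝ) := {p | p.1 < τ ∧ τ ≤ max p.1 c + p.2}

theorem measurableSet_decisionWindow (c τ : ℝ) : MeasurableSet (decisionWindow c τ) :=
  (measurableSet_lt measurable_fst measurable_const).inter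
    (measurableSet_le measurable_const ((measurable_fst.max measurable_const).add measurable_snd))

theorem preimage_prodMk_decisionWindow (c τ t : ℝ) :
    Prod.mk t ⁻¹' decisionWindow c τ = if t < τ then Ici (τ - max t c) else ∅ := by
  ext s
  split_ifs with ht <;> simp [decisionWindow, ht, add_comm]

theorem integral_decisionWindow_of_le {α μ c τ : ℝ} (hτ : 0 ≤ τ) (hτc : τ ≤ c) :
    ∫ t in (0 : ℝ)..τ, α * exp (-(α * t)) * exp (-(μ * max (τ - max t c) 0))
      = exp (-(α * max (τ - c) 0)) - exp (-(α * τ)) := by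
  have hon : EqOn (fun t => α * exp (-(α * t)) * exp (-(μ * max (τ - max t c) 0)))
      (fun t => α * exp (-(α * t))) (uIcc 0 τ) := by
    intro t ht
    rw [uIcc_of_le hτ] at ht
    simp [max_eq_right (ht.2.trans hτc), hτc]
  rw [intervalIntegral.integral_congr hon, integral_mul_exp_neg_mul, max_eq_right (by linarith)]

/-- The identity `exp (-(α * c)) = 1 - α / μ` makes the contributions of `t < c` and `t > c`
combine into a single exponential. -/
theorem integral_decisionWindow_of_lt {α μ c τ : ℝ} (hμ : μ ≠ 0) (hc : 0 ≤ c) (hcτ : c < τ)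
    (hrel : exp (-(α * c)) = 1 - α / μ) :
    ∫ t in (0 : ℝ)..τ, α * exp (-(α * t)) * exp (-(μ * max (τ - max t c) 0))
      = exp (-(α * max (τ - c) 0)) - exp (-(α * τ)) := by
  have hμα : μ - α ≠ 0 := by
    intro h
    rw [show α = μ by linarith, div_self hμ, sub_self] at hrel
    exact (exp_pos _).ne' hrel
  have hint : ∀ a b : ℝ, IntervalIntegrable
      (fun t => α * exp (-(α * t)) * exp (-(μ * max (τ - max t c) 0))) volume a b :=
    fun a b => by apply Continuous.intervalIntegrable; fun_prop
  have hbefore : EqOn (fun t => α * exp (-(α * t)) * exp (-(μ * max (τ - max t c) 0)))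
      (fun t => α * exp (-(α * t)) * exp (-(μ * (τ - c)))) (uIcc 0 c) := by
    intro t ht
    rw [uIcc_of_le hc] at ht
    simp only [max_eq_right ht.2, max_eq_left (sub_nonneg.mpr hcτ.le)]
  have hafter : EqOn (fun t => α * exp (-(α * t)) * exp (-(μ * max (τ - max t c) 0)))
      (fun t => α * exp ((μ - α) * t + -(μ * τ))) (uIcc c τ) := by
    intro t ht
    rw [uIcc_of_le hcτ.le] at ht
    simp only [max_eq_left ht.1, max_eq_left (sub_nonneg.mpr ht.2)]
    rw [mul_assoc, ← exp_add]
    ring_nf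
  rw [← intervalIntegral.integral_add_adjacent_intervals (hint 0 c) (hint c τ),
    intervalIntegral.integral_congr hbefore, intervalIntegral.integral_congr hafter,
    intervalIntegral.integral_mul_const, integral_mul_exp_neg_mul,
    intervalIntegral.integral_const_mul, integral_exp_mul_add hμα, max_eq_left (by linarith)]
  have e1 : exp ((μ - α) * τ + -(μ * τ)) = exp (-(α * τ)) := by ring_nf
  have e2 : exp ((μ - α) * c + -(μ * τ)) = exp (-(α * c)) * exp (-(μ * (τ - c))) := by
    rw [← exp_add]; ring_nf
  have e3 : exp (-(α * (τ - c))) = exp (-(α * τ)) / exp (-(α * c)) := by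
    rw [← exp_sub]; ring_nf
  rw [e1, e2, e3, hrel, mul_zero, neg_zero, exp_zero]
  have hr : 1 - α / μ ≠ 0 := hrel ▸ (exp_pos _).ne'
  field_simp
  ring

theorem setIntegral_Ico_decisionWindow {α μ c τ : ℝ} (hμ : μ ≠ 0) (hc : 0 ≤ c) (hτ : 0 ≤ τ)
    (hrel : exp (-(α * c)) = 1 - α / μ) :
    ∫ t in Ico 0 τ, α * exp (-(α * t)) * exp (-(μ * max (τ - max t c) 0))
      = exp (-(α * max (τ - c) 0)) - exp (-(α * τ)) := by
  rw [integral_Ico_eq_integral_Ioo, ← integral_Ioc_eq_integral_Ioo,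
    ← intervalIntegral.integral_of_le hτ]
  rcases le_or_gt τ c with hτc | hcτ
  · exact integral_decisionWindow_of_le hτ hτc
  · exact integral_decisionWindow_of_lt hμ hc hcτ hrel

theorem expMeasure_prod_decisionWindow {α μ c τ : ℝ} (hα : 0 ≤ α) (hμ : 0 < μ) (hc : 0 ≤ c)
    (hτ : 0 ≤ τ) (hrel : exp (-(α * c)) = 1 - α / μ) :
    (expMeasure α).prod (expMeasure μ) (decisionWindow c τ)
      = ENNReal.ofReal (exp (-(α * max (τ - c) 0)) - exp (-(α * τ))) := by
  have := isProbabilityMeasure_expMeasure hμ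
  have hslice : ∀ t, expMeasure μ (Prod.mk t ⁻¹' decisionWindow c τ)
      = (Iio τ).indicator (fun t => ENNReal.ofReal (exp (-(μ * max (τ - max t c) 0)))) t := by
    intro t
    rw [preimage_prodMk_decisionWindow]
    split_ifs with ht
    · rw [indicator_of_mem (mem_Iio.mpr ht), expMeasure_Ici hμ]
    · rw [indicator_of_notMem (fun h => ht (mem_Iio.mp h)), measure_empty]
  have hmeas : Measurable fun t => ENNReal.ofReal (exp (-(μ * max (τ - max t c) 0))) := by
    fun_prop
  rw [Measure.prod_apply (measurableSet_decisionWindow c τ), lintegral_congr hslice,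
    lintegral_expMeasure α (hmeas.indicator measurableSet_Iio)]
  rw [setLIntegral_congr_fun measurableSet_Ici fun t _ =>
      (indicator_mul_right (Iio τ) (fun x => ENNReal.ofReal (α * exp (-(α * x)))) _).symm,
    setLIntegral_indicator measurableSet_Iio, inter_comm, Ici_inter_Iio,
    ← setIntegral_Ico_decisionWindow hμ.ne' hc hτ hrel, ofReal_integral_eq_lintegral_ofReal]
  · simp_rw [ENNReal.ofReal_mul (mul_nonneg hα (exp_pos _).le)]
  · exact (Continuous.integrableOn_Icc (by fun_prop)).mono_set Ico_subset_Icc_self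
  · exact ae_of_all _ fun t => by positivity

theorem measureReal_decisionWindow {Ω : Type*} [MeasurableSpace Ω] {P : Measure Ω}
    [IsFiniteMeasure P] {T S : Ω → ℝ} {α μ c τ : ℝ} (hT : Measurable T) (hS : Measurable S)
    (hTdist : P.map T = expMeasure α) (hSdist : P.map S = expMeasure μ) (hTS : IndepFun T S P)
    (hα : 0 ≤ α) (hμ : 0 < μ) (hc : 0 ≤ c) (hτ : 0 ≤ τ) (hrel : exp (-(α * c)) = 1 - α / μ) :
    P.real {ω | T ω < τ ∧ τ ≤ max (T ω) c + S ω}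
      = exp (-(α * max (τ - c) 0)) - exp (-(α * τ)) := by
  have hle : exp (-(α * τ)) ≤ exp (-(α * max (τ - c) 0)) :=
    exp_le_exp.mpr (neg_le_neg (mul_le_mul_of_nonneg_left (max_le (by linarith) hτ) hα))
  change P.real ((fun ω => (T ω, S ω)) ⁻¹' decisionWindow c τ) = _
  rw [← map_measureReal_apply (hT.prodMk hS) (measurableSet_decisionWindow c τ),
    (indepFun_iff_map_prod_eq_prod_map_map hT.aemeasurable hS.aemeasurable).mp hTS, hTdist,
    hSdist, measureReal_def, expMeasure_prod_decisionWindow hα hμ hc hτ hrel,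
    ENNReal.toReal_ofReal (sub_nonneg.mpr hle)]

theorem integral_tsum_mul_ite {Ω : Type*} [MeasurableSpace Ω] {P : Measure Ω} [IsFiniteMeasure P]
    {p : ℕ → Ω → Prop} [∀ j ω, Decidable (p j ω)] (hp : ∀ j, MeasurableSet {ω | p j ω})
    {a : ℕ → ℝ} (ha : ∀ j, 0 ≤ a j) (hs : Summable fun j => P.real {ω | p j ω} * a j) :
    ∫ ω, ∑' j, a j * (if p j ω then 1 else 0) ∂P = ∑' j, P.real {ω | p j ω} * a j := by
  have hind : ∀ j ω, a j * (if p j ω then 1 else 0) = {ω | p j ω}.indicator (fun _ => a j) ω := by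
    intro j ω
    by_cases h : p j ω <;> simp [h]
  simp_rw [hind]
  refine (integral_tsum_of_summable_integral_norm
    (fun j => (integrable_const (a j)).indicator (hp j)) ?_).symm.trans ?_
  · simpa [norm_indicator_eq_indicator_norm, integral_indicator_const _ (hp _),
      abs_of_nonneg (ha _)] using hs
  · simp [integral_indicator_const _ (hp _)]

/-- Theorem 2 (per-cycle form): in a synchronous D/M/1/D update-and-decide system with
arrival rate `λ`, service rate `μ`, and periodic decisions at rate `ν = m₀ λ`, the expected
sum of ages upon decisions over one arrival period equals
`m₀ ((1+m₀)/(2ν) + w₁/(ν(1-w₁)))` where `w₁ = e^{-μ(1-ρ₁)/ν}`. -/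
theorem average_AuD_synchronous_DM1D
    {Ω : Type*} [MeasureSpace Ω] [IsProbabilityMeasure (ℙ : Measure Ω)]
    (lam μ ρ₁ : ℝ) (h0 : 0 < lam) (h1 : lam < μ)
    (hρ : ρ₁ ∈ Set.Ioo (0 : ℝ) 1) (hfix : ρ₁ = Real.exp (-μ * (1 - ρ₁) / lam))
    (m₀ : ℕ) (hm₀ : 1 ≤ m₀)
    (T S : Ω → ℝ)
    (hTmeas : Measurable T) (hSmeas : Measurable S)
    (hTdist : Measure.map T ℙ = expMeasure (μ * (1 - ρ₁)))
    (hSdist : Measure.map S ℙ = expMeasure μ)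
    (hindep : IndepFun T S ℙ) :
    ∫ ω, (∑' j : ℕ, (((j : ℝ) + 1) / ((m₀ : ℝ) * lam)) *
        (if T ω < ((j : ℝ) + 1) / ((m₀ : ℝ) * lam) ∧
            ((j : ℝ) + 1) / ((m₀ : ℝ) * lam) ≤ max (T ω) (1 / lam) + S ω
          then (1 : ℝ) else 0)) ∂ℙ
      = (m₀ : ℝ) * ((1 + (m₀ : ℝ)) / (2 * ((m₀ : ℝ) * lam))
          + Real.exp (-μ * (1 - ρ₁) / ((m₀ : ℝ) * lam))
            / (((m₀ : ℝ) * lam) * (1 - Real.exp (-μ * (1 - ρ₁) / ((m₀ : ℝ) * lam))))) := by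
  have hμ : 0 < μ := h0.trans h1
  have hν : 0 < (m₀ : ℝ) * lam := mul_pos (by exact_mod_cast hm₀) h0
  set ν := (m₀ : ℝ) * lam with hν_def
  set α := μ * (1 - ρ₁)
  have hα : 0 < α := mul_pos hμ (by linarith [hρ.2])
  have hrel : exp (-(α * (1 / lam))) = 1 - α / μ := by
    rw [show -(α * (1 / lam)) = -μ * (1 - ρ₁) / lam by ring, ← hfix]
    field_simp
    ring
  set w := exp (-(α / ν))
  have hw : w < 1 := exp_lt_one_iff.mpr (neg_lt_zero.mpr (div_pos hα hν))
  have hprob : ∀ j : ℕ, (ℙ : Measure Ω).real {ω | T ω < ((j : ℝ) + 1) / ν ∧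
      ((j : ℝ) + 1) / ν ≤ max (T ω) (1 / lam) + S ω} = w ^ (j + 1 - m₀) - w ^ (j + 1) := by
    intro j
    rw [measureReal_decisionWindow hTmeas hSmeas hTdist hSdist hindep hα.le hμ (by positivity)
      (by positivity) hrel, show 1 / lam = m₀ / ν by rw [hν_def]; field_simp,
      show (j : ℝ) + 1 = ((j + 1 : ℕ) : ℝ) by push_cast; ring,
      exp_neg_mul_max_natCast_div_sub hν, exp_neg_mul_natCast_div]
  have hseries : HasSum (fun j : ℕ => (w ^ (j + 1 - m₀) - w ^ (j + 1)) * (((j : ℝ) + 1) / ν))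
      (1 / ν * (m₀ * (m₀ + 1) / 2 + m₀ * (w / (1 - w)))) :=
    ((hasSum_succ_mul_pow_tsub_sub_pow (exp_pos _).le hw m₀).mul_left (1 / ν)).congr_fun
      fun j => by ring
  rw [integral_tsum_mul_ite ?_ ?_ ?_]
  · simp_rw [hprob, hseries.tsum_eq]
    field_simp
    ring
  · exact fun j => hTmeas.prodMk hSmeas (measurableSet_decisionWindow _ _)
  · exact fun j => by positivity
  · simpa only [hprob] using hseries.summable
end

section
/- Let 0 < λ < μ, let ρ₁ ∈ (0,1) satisfy ρ₁ = e^{−μ(1−ρ₁)/λ}, let m₀ ≥ 1 be an integer, and set ν = m₀λ, w₀ = e^{−μ/ν} and w₁ = e^{−μ(1−ρ₁)/ν}. Let T ~ Exp(μ(1−ρ₁)) and S ~ Exp(μ) be independent. Then P( S + max(1/λ − T, 0) < 1/ν ) = (ρ₁/(2−ρ₁))·(1/w₁ − w₀). -/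
/-!
The event `S + max (1/λ - T) 0 < d` with `d = 1/ν ≤ 1/λ` is `{S < d, T > (1/λ - d) + S}`.
Conditioning on `S`, the exponential tail of `T ~ Exp a` gives `e^{-a(1/λ - d)} E[e^{-aS}; S < d]`,
and tilting the `Exp μ` density by `e^{-as}` yields `μ/(a+μ)` times the `Exp (a+μ)` density, so the
probability is `e^{-a(1/λ - d)} · μ/(a+μ) · (1 - e^{-(a+μ)d})`. With `a = μ(1-ρ₁)` the fixed-point
equation reads `e^{-a/λ} = ρ₁`, and `a + μ = μ(2-ρ₁)`, which is the closed form.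
-/

open MeasureTheory ProbabilityTheory Set Real
open scoped ProbabilityTheory ENNReal

namespace ProbabilityTheory

lemma ae_nonneg_expMeasure_s13 (r : ℝ) : ∀ᵐ s ∂expMeasure r, 0 ≤ s := by
  simp_rw [ae_iff, not_le]
  change volume.withDensity (exponentialPDF r) (Iio 0) = 0
  rw [withDensity_apply _ measurableSet_Iio]
  exact lintegral_exponentialPDF_of_nonpos le_rfl

lemma expMeasure_Iio {r x : ℝ} (hr : 0 < r) (hx : 0 ≤ x) :
    expMeasure r (Iio x) = ENNReal.ofReal (1 - exp (-(r * x))) := by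
  rw [expMeasure, gammaMeasure, withDensity_apply _ measurableSet_Iio,
    setLIntegral_congr Iio_ae_eq_Iic]
  exact (lintegral_exponentialPDF_eq_antiDeriv hr x).trans (by rw [if_pos hx])

lemma expMeasure_Ioi {r x : ℝ} (hr : 0 < r) (hx : 0 ≤ x) :
    expMeasure r (Ioi x) = ENNReal.ofReal (exp (-(r * x))) := by
  have := isProbabilityMeasure_expMeasure hr
  rw [← compl_Iic, prob_compl_eq_one_sub measurableSet_Iic, ← ofReal_cdf, cdf_expMeasure_eq hr,
    if_pos hx, ← ENNReal.ofReal_one, ← ENNReal.ofReal_sub _ (sub_nonneg.2 (exp_le_one_iff.2 _)),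
    sub_sub_cancel]
  nlinarith

lemma exponentialPDF_mul_exp {a b : ℝ} (hb : 0 ≤ b) (hab : 0 < a + b) (s : ℝ) :
    exponentialPDF b s * ENNReal.ofReal (exp (-(a * s)))
      = ENNReal.ofReal (b / (a + b)) * exponentialPDF (a + b) s := by
  rcases lt_or_ge s 0 with hs | hs
  · simp [exponentialPDF_of_neg hs]
  · rw [exponentialPDF_of_nonneg hs, exponentialPDF_of_nonneg hs,
      ← ENNReal.ofReal_mul (by positivity), ← ENNReal.ofReal_mul (by positivity)]
    congr 1
    field_simp
    rw [mul_assoc, ← exp_add]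
    ring_nf

lemma expMeasure_withDensity_exp {a b : ℝ} (hb : 0 ≤ b) (hab : 0 < a + b) :
    (expMeasure b).withDensity (fun s ↦ ENNReal.ofReal (exp (-(a * s))))
      = ENNReal.ofReal (b / (a + b)) • expMeasure (a + b) := by
  change (volume.withDensity (exponentialPDF b)).withDensity _
    = _ • volume.withDensity (exponentialPDF (a + b))
  rw [← withDensity_mul _ (f := exponentialPDF b) (measurable_exponentialPDFReal b).ennreal_ofReal
      (by fun_prop),
    ← withDensity_smul' _ _ ENNReal.ofReal_ne_top]
  congr 1
  exact funext (exponentialPDF_mul_exp hb hab)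

lemma expMeasure_prod_lt_and_add_lt {a b x d : ℝ} (ha : 0 < a) (hb : 0 < b) (hx : 0 ≤ x)
    (hd : 0 ≤ d) :
    (expMeasure b).prod (expMeasure a) {p | p.1 < d ∧ x + p.1 < p.2}
      = ENNReal.ofReal (exp (-(a * x))) * ENNReal.ofReal (b / (a + b))
          * ENNReal.ofReal (1 - exp (-((a + b) * d))) := by
  have := isProbabilityMeasure_expMeasure ha
  have hslice (s : ℝ) : expMeasure a (Prod.mk s ⁻¹' {p | p.1 < d ∧ x + p.1 < p.2})
      = (Iio d).indicator (fun s ↦ expMeasure a (Ioi (x + s))) s := by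
    by_cases hs : s < d <;> simp [hs, Set.indicator, Ioi_def]
  have htail : ∀ᵐ s ∂(expMeasure b).restrict (Iio d), expMeasure a (Ioi (x + s))
      = ENNReal.ofReal (exp (-(a * x))) * ENNReal.ofReal (exp (-(a * s))) := by
    filter_upwards [ae_restrict_of_ae (ae_nonneg_expMeasure_s13 b)] with s hs
    rw [expMeasure_Ioi ha (by linarith), ← ENNReal.ofReal_mul (exp_pos _).le, ← exp_add]
    ring_nf
  rw [Measure.prod_apply (by measurability), lintegral_congr hslice,
    lintegral_indicator measurableSet_Iio, lintegral_congr_ae htail,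
    lintegral_const_mul _ (by fun_prop), ← withDensity_apply _ measurableSet_Iio,
    expMeasure_withDensity_exp hb.le (by linarith), Measure.smul_apply, smul_eq_mul,
    expMeasure_Iio (by linarith) hd, mul_assoc]

lemma measureReal_lt_and_add_lt_of_indepFun {Ω : Type*} [MeasurableSpace Ω] {P : Measure Ω}
    [IsProbabilityMeasure P] {S T : Ω → ℝ} {a b x d : ℝ} (ha : 0 < a) (hb : 0 < b) (hx : 0 ≤ x)
    (hd : 0 ≤ d) (hS : Measurable S) (hT : Measurable T) (hSdist : P.map S = expMeasure b)
    (hTdist : P.map T = expMeasure a) (hST : IndepFun S T P) :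
    P.real {ω | S ω < d ∧ x + S ω < T ω}
      = exp (-(a * x)) * (b / (a + b)) * (1 - exp (-((a + b) * d))) := by
  have hmap : P.map (fun ω ↦ (S ω, T ω)) = (expMeasure b).prod (expMeasure a) := by
    rw [← hSdist, ← hTdist]
    exact (indepFun_iff_map_prod_eq_prod_map_map hS.aemeasurable hT.aemeasurable).1 hST
  have hpre : {ω | S ω < d ∧ x + S ω < T ω}
      = (fun ω ↦ (S ω, T ω)) ⁻¹' {p : ℝ × ℝ | p.1 < d ∧ x + p.1 < p.2} := rfl
  have hexp_le : exp (-((a + b) * d)) ≤ 1 := exp_le_one_iff.2 (by nlinarith)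
  rw [measureReal_def, hpre, ← Measure.map_apply (hS.prodMk hT) (by measurability), hmap,
    expMeasure_prod_lt_and_add_lt ha hb hx hd, ← ENNReal.ofReal_mul (by positivity),
    ← ENNReal.ofReal_mul (by positivity),
    ENNReal.toReal_ofReal (mul_nonneg (by positivity) (sub_nonneg.2 hexp_le))]

end ProbabilityTheory

lemma setOf_add_max_sub_lt_eq {Ω : Type*} (S T : Ω → ℝ) (c d : ℝ) :
    {ω | S ω + max (c - T ω) 0 < d} = {ω | S ω < d ∧ (c - d) + S ω < T ω} := by
  ext ω
  simp only [mem_ofPred_eq, ← lt_sub_iff_add_lt', max_lt_iff]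
  constructor <;> rintro ⟨h, h'⟩ <;> constructor <;> linarith

/-- Proposition 4: missing probability of a synchronous D/M/1/D update-and-decide
system with periodic decisions of rate `ν = m₀ λ`:
`P(S + max (1/λ - T) 0 < 1/ν) = (ρ₁/(2-ρ₁)) (1/w₁ - w₀)`. -/
theorem missing_probability_DM1D
    {Ω : Type*} [MeasureSpace Ω] [IsProbabilityMeasure (ℙ : Measure Ω)]
    (lam μ ρ₁ : ℝ) (h0 : 0 < lam) (h1 : lam < μ)
    (hρ : ρ₁ ∈ Set.Ioo (0 : ℝ) 1) (hfix : ρ₁ = Real.exp (-μ * (1 - ρ₁) / lam))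
    (m₀ : ℕ) (hm₀ : 1 ≤ m₀)
    (T S : Ω → ℝ)
    (hTmeas : Measurable T) (hSmeas : Measurable S)
    (hTdist : Measure.map T ℙ = expMeasure (μ * (1 - ρ₁)))
    (hSdist : Measure.map S ℙ = expMeasure μ)
    (hindep : IndepFun T S ℙ) :
    (ℙ {ω | S ω + max (1 / lam - T ω) 0 < 1 / ((m₀ : ℝ) * lam)}).toReal
      = ρ₁ / (2 - ρ₁) * (1 / Real.exp (-μ * (1 - ρ₁) / ((m₀ : ℝ) * lam))
          - Real.exp (-μ / ((m₀ : ℝ) * lam))) := by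
  obtain ⟨hρ0, hρ1⟩ := hρ
  have hμ : 0 < μ := h0.trans h1
  set a := μ * (1 - ρ₁)
  set d := 1 / ((m₀ : ℝ) * lam)
  have hdc : d ≤ 1 / lam :=
    one_div_le_one_div_of_le h0 (le_mul_of_one_le_left h0.le (by exact_mod_cast hm₀))
  rw [← measureReal_def, setOf_add_max_sub_lt_eq, measureReal_lt_and_add_lt_of_indepFun
    (mul_pos hμ (by linarith)) hμ (by linarith) (by positivity) hSmeas hTmeas hSdist hTdist
    hindep.symm]
  have hρ : exp (-(a * (1 / lam))) = ρ₁ := by rw [hfix]; congr 1; ring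
  have hw₁ : exp (-μ * (1 - ρ₁) / ((m₀ : ℝ) * lam)) = (exp (a * d))⁻¹ := by
    rw [← exp_neg]; congr 1; ring
  have hw₀ : exp (-μ / ((m₀ : ℝ) * lam)) = exp (-(μ * d)) := by congr 1; ring
  have hshift : exp (-(a * (1 / lam - d))) = ρ₁ * exp (a * d) := by
    rw [← hρ, ← exp_add]; congr 1; ring
  have hsplit : exp (-((a + μ) * d)) = (exp (a * d))⁻¹ * exp (-(μ * d)) := by
    rw [← exp_neg, ← exp_add]; congr 1; ring
  have h2ρ : 2 - ρ₁ ≠ 0 := by linarith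
  rw [hw₁, hw₀, hshift, hsplit, show a + μ = μ * (2 - ρ₁) by ring]
  field_simp
end

section
/- Let 0 < λ < μ and let ρ₁ ∈ (0,1) satisfy ρ₁ = e^{−μ(1−ρ₁)/λ}. Then for every integer m₀ ≥ 1, with ν = m₀λ and w₁ = e^{−μ(1−ρ₁)/ν}, it holds that (1+m₀)/(2ν) + w₁/(ν(1−w₁)) > 1/(2λ) + 1/(μ(1−ρ₁)). -/
/-! With `x = μ(1 - ρ₁)/ν`, subtracting the common term `1/(2λ)` and multiplying by `ν` turns
the claim into `1/2 + 1/(eˣ - 1) > 1/x`, i.e. `coth (x/2) > 2/x`, or `tanh y < y` for `y > 0`.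
Cleared of denominators this is `(x - 2) eˣ + x + 2 > 0`, a function vanishing at `0` whose
derivative `(x - 1) eˣ + 1` is positive for `x > 0` because `1 - x < e⁻ˣ`. -/

open Real Set

lemma one_sub_mul_exp_lt_one {x : ℝ} (hx : x ≠ 0) : (1 - x) * exp x < 1 := by
  have h := mul_lt_mul_of_pos_right (one_sub_lt_exp_neg hx) (exp_pos x)
  rwa [← exp_add, neg_add_cancel, exp_zero] at h

lemma strictMonoOn_sub_two_mul_exp_add_self :
    StrictMonoOn (fun x : ℝ => (x - 2) * exp x + x) (Ici 0) := by
  refine strictMonoOn_of_deriv_pos (convex_Ici 0) (by fun_prop) fun x hx => ?_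
  rw [interior_Ici] at hx
  have hderiv : HasDerivAt (fun x : ℝ => (x - 2) * exp x + x) ((x - 1) * exp x + 1) x := by
    refine ((((hasDerivAt_id' x).sub_const 2).mul (hasDerivAt_exp x)).add
      (hasDerivAt_id' x)).congr_deriv ?_
    ring
  rw [hderiv.deriv]
  linarith [one_sub_mul_exp_lt_one hx.ne']

lemma two_mul_exp_sub_one_lt {x : ℝ} (hx : 0 < x) : 2 * (exp x - 1) < x * (exp x + 1) := by
  have h := strictMonoOn_sub_two_mul_exp_add_self self_mem_Ici (mem_Ici.2 hx.le) hx
  simp only [exp_zero] at h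
  linarith

lemma one_div_lt_half_add_one_div_exp_sub_one {x : ℝ} (hx : 0 < x) :
    1 / x < 1 / 2 + 1 / (exp x - 1) := by
  have hE : 0 < exp x - 1 := sub_pos.2 (one_lt_exp_iff.2 hx)
  rw [div_add_div _ _ two_ne_zero hE.ne', div_lt_div_iff₀ hx (by positivity)]
  linarith [two_mul_exp_sub_one_lt hx]

lemma exp_neg_div_one_sub_exp_neg (x : ℝ) : exp (-x) / (1 - exp (-x)) = 1 / (exp x - 1) := by
  rw [← mul_div_mul_left _ _ (exp_pos x).ne', mul_sub, ← exp_add, add_neg_cancel, exp_zero,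
    mul_one]

lemma one_div_lt_one_div_two_mul_add_exp_neg_div {θ ν : ℝ} (hθ : 0 < θ) (hν : 0 < ν) :
    1 / θ < 1 / (2 * ν) + exp (-θ / ν) / (ν * (1 - exp (-θ / ν))) := by
  have hx : 0 < θ / ν := div_pos hθ hν
  calc 1 / θ = 1 / ν * (1 / (θ / ν)) := by field_simp
    _ < 1 / ν * (1 / 2 + 1 / (exp (θ / ν) - 1)) :=
      mul_lt_mul_of_pos_left (one_div_lt_half_add_one_div_exp_sub_one hx) (one_div_pos.2 hν)
    _ = 1 / (2 * ν) + exp (-θ / ν) / (ν * (1 - exp (-θ / ν))) := by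
      rw [neg_div, ← exp_neg_div_one_sub_exp_neg, mul_add, ← mul_div_assoc]
      field_simp

theorem periodic_decisions_worse_than_poisson_general
    (lam μ ρ₁ : ℝ) (h0 : 0 < lam) (h1 : lam < μ)
    (hρ : ρ₁ ∈ Set.Ioo (0 : ℝ) 1) :
    ∀ m₀ : ℕ, 1 ≤ m₀ →
      (1 + (m₀ : ℝ)) / (2 * ((m₀ : ℝ) * lam))
          + Real.exp (-μ * (1 - ρ₁) / ((m₀ : ℝ) * lam))
            / (((m₀ : ℝ) * lam) * (1 - Real.exp (-μ * (1 - ρ₁) / ((m₀ : ℝ) * lam))))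
        > 1 / (2 * lam) + 1 / (μ * (1 - ρ₁)) := by
  intro m₀ hm
  have hm₀ : (0 : ℝ) < m₀ := by exact_mod_cast hm
  have hθ : 0 < μ * (1 - ρ₁) := mul_pos (h0.trans h1) (sub_pos.2 hρ.2)
  have hgap := one_div_lt_one_div_two_mul_add_exp_neg_div hθ (mul_pos hm₀ h0)
  have hsplit : (1 + (m₀ : ℝ)) / (2 * (m₀ * lam)) = 1 / (2 * lam) + 1 / (2 * (m₀ * lam)) := by
    field_simp
    ring
  rw [neg_mul, hsplit]
  linarith

/-- The average age upon decisions of a synchronous D/M/1/D system with periodic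
decisions of rate `ν = m₀ λ` is strictly larger than `1/(2λ) + 1/(μ(1-ρ₁))`, the average
age upon decisions of the corresponding D/M/1/M system with Poisson decisions. -/
theorem periodic_decisions_worse_than_poisson
    (lam μ ρ₁ : ℝ) (h0 : 0 < lam) (h1 : lam < μ)
    (hρ : ρ₁ ∈ Set.Ioo (0 : ℝ) 1) (hfix : ρ₁ = Real.exp (-μ * (1 - ρ₁) / lam)) :
    ∀ m₀ : ℕ, 1 ≤ m₀ →
      (1 + (m₀ : ℝ)) / (2 * ((m₀ : ℝ) * lam))
          + Real.exp (-μ * (1 - ρ₁) / ((m₀ : ℝ) * lam))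
            / (((m₀ : ℝ) * lam) * (1 - Real.exp (-μ * (1 - ρ₁) / ((m₀ : ℝ) * lam))))
        > 1 / (2 * lam) + 1 / (μ * (1 - ρ₁)) :=
  periodic_decisions_worse_than_poisson_general lam μ ρ₁ h0 h1 hρ
end

section
/- Let 0 < λ < μ and let ρ₁ ∈ (0,1) satisfy ρ₁ = e^{−μ(1−ρ₁)/λ}. For each integer m₀ ≥ 1 set ν(m₀) = m₀λ and w₁(m₀) = e^{−μ(1−ρ₁)/ν(m₀)}. Then the sequence m₀ ↦ (1+m₀)/(2ν(m₀)) + w₁(m₀)/(ν(m₀)(1−w₁(m₀))) is strictly decreasing in m₀. -/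
/-!
With `x = μ(1 - ρ₁)/(m₀λ)` the age upon decisions equals `1/(2λ) + φ(x)/(μ(1 - ρ₁))`, where
`φ(x) = x/2 + x/(eˣ - 1) = (x/2) coth(x/2)`. Since `x` decreases in `m₀`, it suffices that `φ` is
strictly increasing on `(0, ∞)`: its derivative is `eˣ (sinh x - x) / (eˣ - 1)² > 0`.
-/

open Real Set

lemma two_mul_mul_exp_lt_exp_sq_sub_one {x : ℝ} (hx : 0 < x) :
    2 * x * exp x < exp x ^ 2 - 1 := by
  have hsinh : x < sinh x := self_lt_sinh_iff.2 hx
  have hinv : exp x * exp (-x) = 1 := by rw [← exp_add, add_neg_cancel, exp_zero]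
  rw [sinh_eq] at hsinh
  nlinarith [exp_pos x]

lemma strictMonoOn_half_add_div_exp_sub_one :
    StrictMonoOn (fun x : ℝ => x / 2 + x / (exp x - 1)) (Ioi 0) := by
  have hden : ∀ x ∈ Ioi (0 : ℝ), exp x - 1 ≠ 0 := fun x hx =>
    (sub_pos.2 (one_lt_exp_iff.2 hx)).ne'
  refine strictMonoOn_of_deriv_pos (convex_Ioi 0) ?_ fun x hx => ?_
  · exact ContinuousOn.add (by fun_prop) (ContinuousOn.div (by fun_prop) (by fun_prop) hden)
  · rw [interior_Ioi] at hx
    have hd : HasDerivAt (fun x : ℝ => x / 2 + x / (exp x - 1))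
        (1 / 2 + (1 * (exp x - 1) - x * exp x) / (exp x - 1) ^ 2) x :=
      ((hasDerivAt_id x).div_const 2).add
        ((hasDerivAt_id x).div ((hasDerivAt_exp x).sub_const 1) (hden x hx))
    rw [hd.deriv]
    have hpos : 0 < (exp x - 1) ^ 2 := pow_pos (sub_pos.2 (one_lt_exp_iff.2 hx)) 2
    have key := two_mul_mul_exp_lt_exp_sq_sub_one (mem_Ioi.1 hx)
    rw [div_add_div _ _ two_ne_zero hpos.ne']
    exact div_pos (by nlinarith) (by positivity)

lemma div_add_exp_neg_div_eq_half_add_div_exp_sub_one {lam m c : ℝ} (hlam : lam ≠ 0) (hm : m ≠ 0) (hc : c ≠ 0) :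
    (1 + m) / (2 * (m * lam)) + exp (-c / (m * lam)) / (m * lam * (1 - exp (-c / (m * lam))))
      = 1 / (2 * lam) + (c / (m * lam) / 2 + c / (m * lam) / (exp (c / (m * lam)) - 1)) / c := by
  have hx : c / (m * lam) ≠ 0 := div_ne_zero hc (mul_ne_zero hm hlam)
  have hE : exp (c / (m * lam)) - 1 ≠ 0 := sub_ne_zero.2 (fun h => hx (exp_eq_one_iff _ |>.1 h))
  have hE' : exp (c / (m * lam)) ≠ 0 := (exp_pos _).ne'
  rw [neg_div, exp_neg]
  field_simp
  ring

theorem periodic_decisions_AuD_strictAnti_general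
    (lam μ ρ₁ : ℝ) (h0 : 0 < lam) (h1 : lam < μ)
    (hρ : ρ₁ ∈ Set.Ioo (0 : ℝ) 1) :
    StrictAntiOn
      (fun m₀ : ℕ =>
        (1 + (m₀ : ℝ)) / (2 * ((m₀ : ℝ) * lam))
          + Real.exp (-μ * (1 - ρ₁) / ((m₀ : ℝ) * lam))
            / (((m₀ : ℝ) * lam) * (1 - Real.exp (-μ * (1 - ρ₁) / ((m₀ : ℝ) * lam)))))
      (Set.Ici 1) := by
  intro a ha b hb hab
  have hc : 0 < μ * (1 - ρ₁) := mul_pos (h0.trans h1) (sub_pos.2 hρ.2)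
  have ha' : (0 : ℝ) < a := Nat.cast_pos.2 ha
  have hb' : (0 : ℝ) < b := Nat.cast_pos.2 hb
  have hx : μ * (1 - ρ₁) / (b * lam) < μ * (1 - ρ₁) / (a * lam) :=
    div_lt_div_of_pos_left hc (by positivity) (by gcongr)
  simp only [neg_mul]
  rw [div_add_exp_neg_div_eq_half_add_div_exp_sub_one h0.ne' ha'.ne' hc.ne',
    div_add_exp_neg_div_eq_half_add_div_exp_sub_one h0.ne' hb'.ne' hc.ne']
  gcongr ?_ + ?_ / _
  exact strictMonoOn_half_add_div_exp_sub_one (div_pos hc (by positivity))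
    (div_pos hc (by positivity)) hx

/-- The average age upon decisions of the synchronous D/M/1/D system with periodic
decisions of rate `ν = m₀ λ` is strictly decreasing in `m₀` (for `m₀ ≥ 1`). -/
theorem periodic_decisions_AuD_strictAnti
    (lam μ ρ₁ : ℝ) (h0 : 0 < lam) (h1 : lam < μ)
    (hρ : ρ₁ ∈ Set.Ioo (0 : ℝ) 1) (hfix : ρ₁ = Real.exp (-μ * (1 - ρ₁) / lam)) :
    StrictAntiOn
      (fun m₀ : ℕ =>
        (1 + (m₀ : ℝ)) / (2 * ((m₀ : ℝ) * lam))
          + Real.exp (-μ * (1 - ρ₁) / ((m₀ : ℝ) * lam))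
            / (((m₀ : ℝ) * lam) * (1 - Real.exp (-μ * (1 - ρ₁) / ((m₀ : ℝ) * lam)))))
      (Set.Ici 1) :=
  periodic_decisions_AuD_strictAnti_general lam μ ρ₁ h0 h1 hρ
end
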